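/- Let G be a Lie group with identity e and Lie algebra 𝔤 = T_e G, F a normed space, U ⊆ F open, and n ≥ 1. Let η₀, …, η_{n−1} : U → G and φ₀, …, φ_n : U → G be maps differentiable on U such that φ_{i+1}(u) = η_i(u) * φ_i(u) for all u ∈ U and 0 ≤ i ≤ n−1, and φ_n = φ₀ as functions on U. Then for all u ∈ U and v ∈ F: Σ_{i=0}^{n−1} ( D L_{φ_{i+1}(u)⁻¹}(φ_{i+1}(u)) ∘ D R_{φ_i(u)}(η_i(u)) ∘ Dη_i(u) ) v = 0 in 𝔤. -/

import Mathlib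

open scoped Manifold Topology

/-!
Write `δφ = DL_{φ⁻¹} ∘ Dφ` for the left logarithmic derivative of a map into `G`. The Leibniz rule
for `η · φ` together with `L_{(ηφ)⁻¹} ∘ L_η = L_{φ⁻¹}` gives
`δ(η · φ) = δφ + DL_{(ηφ)⁻¹} ∘ DR_φ ∘ Dη`, so the `i`-th summand is `δφ_{i+1} - δφ_i` and the sum
telescopes to `δφ_n - δφ_0 = 0`.
-/

section LeftLogDeriv

variable {𝕜 : Type*} [NontriviallyNormedField 𝕜]
  {E' : Type*} [NormedAddCommGroup E'] [NormedSpace 𝕜 E']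
  {H' : Type*} [TopologicalSpace H'] {I' : ModelWithCorners 𝕜 E' H'}
  {M : Type*} [TopologicalSpace M] [ChartedSpace H' M]
  {E : Type*} [NormedAddCommGroup E] [NormedSpace 𝕜 E]
  {H : Type*} [TopologicalSpace H] (I : ModelWithCorners 𝕜 E H)
  {G : Type*} [TopologicalSpace G] [ChartedSpace H G] [Group G]

variable (I') in
noncomputable def leftLogDeriv (f : M → G) (x : M) :
    TangentSpace I' x →L[𝕜] TangentSpace I (1 : G) :=
  (mfderiv I I ((f x)⁻¹ * ·) (f x)).comp (mfderiv I' I f x)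

theorem Filter.EventuallyEq.leftLogDeriv_eq {f g : M → G} {x : M} (h : f =ᶠ[𝓝 x] g) :
    leftLogDeriv I' I f x = leftLogDeriv I' I g x := by
  rw [leftLogDeriv, leftLogDeriv, h.mfderiv_eq, h.eq_of_nhds]

variable [ContMDiffMul I 1 G]

theorem mfderiv_mul_apply {f g : M → G} {x : M} (hf : MDifferentiableAt I' I f x)
    (hg : MDifferentiableAt I' I g x) (v : TangentSpace I' x) :
    mfderiv I' I (fun y => f y * g y) x v =
      mfderiv I I (· * g x) (f x) (mfderiv I' I f x v) +
        mfderiv I I (f x * ·) (g x) (mfderiv I' I g x v) := by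
  have hmul : MDifferentiableAt (I.prod I) I (fun p : G × G => p.1 * p.2) (f x, g x) :=
    (contMDiff_mul I 1).mdifferentiableAt one_ne_zero
  rw [show (fun y => f y * g y) = (fun p : G × G => p.1 * p.2) ∘ (fun y => (f y, g y)) from rfl,
    mfderiv_comp x hmul (hf.prodMk hg), mfderiv_prod_eq_add_comp hmul, hf.mfderiv_prod hg]
  rfl

theorem mfderiv_mul_left_comp_mul_left (a b c : G) (w : TangentSpace I c) :
    mfderiv I I (a * ·) (b * c) (mfderiv I I (b * ·) c w) = mfderiv I I (a * b * ·) c w := by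
  rw [← mfderiv_comp_apply_of_eq c mdifferentiableAt_mul_left mdifferentiableAt_mul_left rfl,
    show (a * ·) ∘ (b * ·) = (a * b * ·) from funext fun y => (mul_assoc a b y).symm]

theorem leftLogDeriv_mul_apply {f g : M → G} {x : M} (hf : MDifferentiableAt I' I f x)
    (hg : MDifferentiableAt I' I g x) (v : TangentSpace I' x) :
    leftLogDeriv I' I (fun y => f y * g y) x v =
      leftLogDeriv I' I g x v + @id (TangentSpace I (1 : G))
        (mfderiv I I ((f x * g x)⁻¹ * ·) (f x * g x)
          (mfderiv I I (· * g x) (f x) (mfderiv I' I f x v))) := by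
  have hleft : (f x * g x)⁻¹ * f x = (g x)⁻¹ := by group
  have htrans := mfderiv_mul_left_comp_mul_left I (f x * g x)⁻¹ (f x) (g x) (mfderiv I' I g x v)
  rw [hleft] at htrans
  change @id (TangentSpace I (1 : G))
      (mfderiv I I ((f x * g x)⁻¹ * ·) (f x * g x) (mfderiv I' I (fun y => f y * g y) x v)) =
    @id (TangentSpace I (1 : G)) (mfderiv I I ((g x)⁻¹ * ·) (g x) (mfderiv I' I g x v)) + _
  rw [mfderiv_mul_apply I hf hg, map_add, htrans, add_comm]
  rfl

end LeftLogDeriv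

theorem stmt_14_general {E : Type*} [NormedAddCommGroup E] [NormedSpace ℝ E]
    {H : Type*} [TopologicalSpace H] (I : ModelWithCorners ℝ E H)
    (G : Type*) [TopologicalSpace G] [ChartedSpace H G] [Group G]
    [LieGroup I (⊤ : ℕ∞) G]
    {F : Type*} [NormedAddCommGroup F] [NormedSpace ℝ F]
    (U : Set F) (hU : IsOpen U) (n : ℕ)
    (η φ : ℕ → F → G)
    (hcoh : ∀ u ∈ U, ∀ i < n, φ (i + 1) u = η i u * φ i u)
    (hper : ∀ u ∈ U, φ n u = φ 0 u)
    (hdη : ∀ i < n, ∀ u ∈ U, MDifferentiableAt 𝓘(ℝ, F) I (η i) u)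
    (hdφ : ∀ i ≤ n, ∀ u ∈ U, MDifferentiableAt 𝓘(ℝ, F) I (φ i) u) :
    ∀ u ∈ U, ∀ v : F,
      ∑ i ∈ Finset.range n,
        @id (TangentSpace I (1 : G))
          (mfderiv I I (fun y => (φ (i + 1) u)⁻¹ * y) (φ (i + 1) u)
            ((mfderiv I I (fun y => y * φ i u) (η i u))
              (mfderiv 𝓘(ℝ, F) I (η i) u v))) = 0 := by
  intro u hu v
  have hUu : ∀ᶠ x in 𝓝 u, x ∈ U := hU.mem_nhds hu
  have hstep : ∀ i ∈ Finset.range n,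
      @id (TangentSpace I (1 : G))
        (mfderiv I I (fun y => (φ (i + 1) u)⁻¹ * y) (φ (i + 1) u)
          ((mfderiv I I (fun y => y * φ i u) (η i u)) (mfderiv 𝓘(ℝ, F) I (η i) u v))) =
        leftLogDeriv 𝓘(ℝ, F) I (φ (i + 1)) u v - leftLogDeriv 𝓘(ℝ, F) I (φ i) u v := by
    intro i hi
    rw [Finset.mem_range] at hi
    have hφ : (fun x => η i x * φ i x) =ᶠ[𝓝 u] φ (i + 1) :=
      hUu.mono fun x hx => (hcoh x hx i hi).symm
    have hmul := leftLogDeriv_mul_apply I (hdη i hi u hu) (hdφ i hi.le u hu) v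
    rw [hφ.leftLogDeriv_eq, ← hcoh u hu i hi] at hmul
    exact eq_sub_of_add_eq' hmul.symm
  have hφn : φ n =ᶠ[𝓝 u] φ 0 := hUu.mono hper
  rw [Finset.sum_congr rfl hstep, Finset.sum_range_sub (fun i => leftLogDeriv 𝓘(ℝ, F) I (φ i) u v),
    hφn.leftLogDeriv_eq, sub_self]

/-- Differentiating the periodic orbit obstruction for a Lie-group valued cocycle:
if `φ_{i+1} = η_i · φ_i` on `U` and `φ_n = φ_0`, with all maps differentiable on `U`, then
`Σ_{i<n} DL_{φ_{i+1}(u)⁻¹}(φ_{i+1}(u)) ∘ DR_{φ_i(u)}(η_i(u)) ∘ Dη_i(u)` vanishes in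
`𝔤 = T_e G`. -/
theorem stmt_14 {E : Type*} [NormedAddCommGroup E] [NormedSpace ℝ E]
    {H : Type*} [TopologicalSpace H] (I : ModelWithCorners ℝ E H)
    (G : Type*) [TopologicalSpace G] [ChartedSpace H G] [Group G]
    [IsManifold I (⊤ : ℕ∞) G] [LieGroup I (⊤ : ℕ∞) G]
    {F : Type*} [NormedAddCommGroup F] [NormedSpace ℝ F]
    (U : Set F) (hU : IsOpen U) (n : ℕ) (hn : 1 ≤ n)
    (η φ : ℕ → F → G)
    (hcoh : ∀ u ∈ U, ∀ i < n, φ (i + 1) u = η i u * φ i u)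
    (hper : ∀ u ∈ U, φ n u = φ 0 u)
    (hdη : ∀ i < n, ∀ u ∈ U, MDifferentiableAt 𝓘(ℝ, F) I (η i) u)
    (hdφ : ∀ i ≤ n, ∀ u ∈ U, MDifferentiableAt 𝓘(ℝ, F) I (φ i) u) :
    ∀ u ∈ U, ∀ v : F,
      ∑ i ∈ Finset.range n,
        @id (TangentSpace I (1 : G))
          (mfderiv I I (fun y => (φ (i + 1) u)⁻¹ * y) (φ (i + 1) u)
            ((mfderiv I I (fun y => y * φ i u) (η i u))
              (mfderiv 𝓘(ℝ, F) I (η i) u v))) = 0 :=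
  stmt_14_general I G U hU n η φ hcoh hper hdη hdφ
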